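/- The Lerch sum μ(u,v;τ) := (e^{πiu}/θ(v;τ)) Σ_{n∈ℤ} (−1)ⁿ e^{πi(n²+n)τ + 2πinv}/(1 − e^{2πinτ + 2πiu}) satisfies μ(u,v;τ) + e^{−2πi(u−v)−πiτ} μ(u+τ, v;τ) = −i e^{−πi(u−v) − πiτ/4}. -/

import Mathlib

open Real

/-- The Jacobi theta function `θ(z;τ) = Σ_{ν∈1/2+ℤ} e^{πiν²τ + 2πiν(z+1/2)}`. -/
noncomputable def jtheta (z τ : ℂ) : ℂ :=
  ∑' n : ℤ, Complex.exp ((π : ℂ) * Complex.I * ((n : ℂ) + 1/2) ^ 2 * τ +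
    2 * (π : ℂ) * Complex.I * ((n : ℂ) + 1/2) * (z + 1/2))

open Complex Filter Finset

lemma pow_id (x : ℂ) (hx : x ≠ 0) (n : ℕ) :
    (x + x⁻¹) * (x⁻¹^(2*n) * ∑ k ∈ range (2*n+1), (-(x^2))^k) = x^(2*n+1) + x⁻¹^(2*n+1) := by
  have hp : x^(2*(2*n+1)) = (x^2)^(2*n+1) := pow_mul x 2 (2*n+1)
  have key : (∑ k ∈ range (2*n+1), (-(x^2))^k) * (x^2+1) = x^(2*(2*n+1)) + 1 := by
    have hg := geom_sum_mul (-(x^2)) (2*n+1)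
    have hodd : (-(x^2))^(2*n+1) = -(x^2)^(2*n+1) := Odd.neg_pow ⟨n, by ring⟩ _
    rw [hodd, ← hp] at hg
    linear_combination -hg
  have hxy : x * x⁻¹ = 1 := mul_inv_cancel₀ hx
  have hxy2 : (x * x⁻¹)^(2*n+1) = 1 := by rw [hxy, one_pow]
  linear_combination x⁻¹^(2*n+1) * key - x⁻¹^(2*n) * (∑ k ∈ range (2*n+1), (-(x^2))^k) * x * hxy
    + x^(2*n+1) * hxy2

lemma norm_cexp_ri (r : ℝ) (w : ℂ) : ‖cexp ((r:ℂ) * I * w)‖ = Real.exp (-(r * w.im)) := by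
  rw [Complex.norm_exp]
  congr 1
  simp [Complex.mul_re, Complex.mul_im]

noncomputable def ttf (z τ : ℂ) (n : ℤ) : ℂ :=
  cexp ((π : ℂ) * I * ((n : ℂ) + 1/2) ^ 2 * τ + 2 * (π : ℂ) * I * ((n : ℂ) + 1/2) * (z + 1/2))

noncomputable def Af (z : ℂ) : ℂ := cexp ((π:ℂ) * I * (z + 1/2))

noncomputable def qf (τ : ℂ) (n : ℕ) : ℂ := cexp ((π:ℂ) * I * ((n:ℂ) + 1/2)^2 * τ)

noncomputable def Gf (z τ : ℂ) (n : ℕ) : ℂ :=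
  qf τ n * ((Af z)⁻¹^(2*n) * ∑ k ∈ range (2*n+1), (-((Af z)^2))^k)

lemma jtheta_eq_ttf (z τ : ℂ) : jtheta z τ = ∑' n : ℤ, ttf z τ n := rfl

lemma summable_ttf (z : ℂ) {τ : ℂ} (hτ : 0 < τ.im) : Summable (ttf z τ) := by
  have heq : ttf z τ = fun n => cexp ((π:ℂ)*I*τ/4 + (π:ℂ)*I*(z+1/2)) *
      jacobiTheta₂_term n (z+1/2+τ/2) τ := by
    funext n; rw [ttf, jacobiTheta₂_term, ← Complex.exp_add]; congr 1; ring
  rw [heq]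
  exact ((summable_jacobiTheta₂_term_iff _ τ).mpr hτ).mul_left _

lemma ttf_nat (z τ : ℂ) (n : ℕ) : ttf z τ n = qf τ n * (Af z)^(2*n+1) := by
  rw [ttf, qf, Af, ← Complex.exp_nat_mul, ← Complex.exp_add]
  congr 1
  push_cast
  ring

lemma ttf_neg (z τ : ℂ) (n : ℕ) : ttf z τ (-(n+1)) = qf τ n * (Af z)⁻¹^(2*n+1) := by
  rw [ttf, qf, Af, ← Complex.exp_neg, ← Complex.exp_nat_mul, ← Complex.exp_add]
  congr 1
  push_cast
  ring

lemma ttf_pair (z τ : ℂ) (n : ℕ) :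
    ttf z τ n + ttf z τ (-(n+1)) = (Af z + (Af z)⁻¹) * Gf z τ n := by
  rw [ttf_nat, ttf_neg, Gf]
  have h := pow_id (Af z) (Complex.exp_ne_zero _) n
  calc qf τ n * (Af z)^(2*n+1) + qf τ n * (Af z)⁻¹^(2*n+1)
      = qf τ n * ((Af z)^(2*n+1) + (Af z)⁻¹^(2*n+1)) := by ring
    _ = qf τ n * ((Af z + (Af z)⁻¹) * ((Af z)⁻¹^(2*n) * ∑ k ∈ range (2*n+1), (-((Af z)^2))^k)) := by
        rw [← h]
    _ = _ := by ring

lemma norm_Af (z : ℂ) : ‖Af z‖ = Real.exp (-(π * z.im)) := by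
  rw [Af, norm_cexp_ri π (z + 1/2)]
  simp

lemma norm_Af_inv (z : ℂ) : ‖(Af z)⁻¹‖ = Real.exp (π * z.im) := by
  rw [norm_inv, norm_Af, ← Real.exp_neg, neg_neg]

lemma norm_qf (τ : ℂ) (n : ℕ) : ‖qf τ n‖ = Real.exp (-(π * ((n:ℝ)+1/2)^2 * τ.im)) := by
  rw [qf]
  have h : (π:ℂ) * I * ((n:ℂ)+1/2)^2 * τ = ((π * ((n:ℝ)+1/2)^2 : ℝ):ℂ) * I * τ := by
    push_cast; ring
  rw [h, norm_cexp_ri]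

lemma norm_Gf_le (z τ : ℂ) (hz : |z.im| ≤ τ.im / 2) (hτ : 0 < τ.im) (n : ℕ) :
    ‖Gf z τ n‖ ≤ (2*(n:ℝ)+1) * Real.exp (-(π * τ.im * (n:ℝ)^2)) * Real.exp (-(π * τ.im / 4)) := by
  have hπ : (0:ℝ) < π := Real.pi_pos
  have hTb : ‖(Af z)⁻¹^(2*n) * ∑ k ∈ range (2*n+1), (-((Af z)^2))^k‖
      ≤ (2*(n:ℝ)+1) * Real.exp (π * τ.im * n) := by
    rw [norm_mul]
    calc ‖(Af z)⁻¹^(2*n)‖ * ‖∑ k ∈ range (2*n+1), (-((Af z)^2))^k‖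
        ≤ ‖(Af z)⁻¹^(2*n)‖ * ∑ k ∈ range (2*n+1), ‖(-((Af z)^2))^k‖ := by
          exact mul_le_mul_of_nonneg_left (norm_sum_le _ _) (norm_nonneg _)
      _ = ∑ k ∈ range (2*n+1), ‖(Af z)⁻¹‖^(2*n) * ‖Af z‖^(2*k) := by
          rw [Finset.mul_sum]
          refine Finset.sum_congr rfl fun k _ => ?_
          rw [norm_pow, norm_pow, norm_neg, norm_pow, ← pow_mul]
      _ ≤ ∑ k ∈ range (2*n+1), Real.exp (π * τ.im * n) := by
          refine Finset.sum_le_sum fun k hk => ?_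
          rw [norm_Af, norm_Af_inv, ← Real.exp_nat_mul, ← Real.exp_nat_mul, ← Real.exp_add]
          apply Real.exp_le_exp.mpr
          have hk' : (k:ℝ) ≤ 2*n := by
            have := Finset.mem_range.mp hk
            exact_mod_cast Nat.lt_succ_iff.mp this
          have habs1 : -(τ.im/2) ≤ z.im := by cases abs_le.mp hz; linarith
          have habs2 : z.im ≤ τ.im/2 := by cases abs_le.mp hz; linarith
          have hkn : (0:ℝ) ≤ (k:ℝ) := Nat.cast_nonneg k
          have hnt : (0:ℝ) ≤ (n:ℝ) := Nat.cast_nonneg n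
          push_cast
          have hcore : 2*(n:ℝ)*z.im - 2*(k:ℝ)*z.im ≤ τ.im * (n:ℝ) := by
            rcases le_or_gt 0 z.im with hy | hy
            · nlinarith [mul_nonneg hkn hy, mul_le_mul_of_nonneg_left habs2 hnt]
            · rcases le_or_gt (k:ℝ) (n:ℝ) with hkk | hkk
              · nlinarith [mul_nonneg (sub_nonneg.mpr hkk) (neg_nonneg.mpr hy.le),
                  mul_nonneg hτ.le hnt]
              · nlinarith [mul_le_mul (by linarith : (k:ℝ)-(n:ℝ) ≤ (n:ℝ))
                  (by linarith : -z.im ≤ τ.im/2) (by linarith) hnt]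
          nlinarith [mul_le_mul_of_nonneg_left hcore hπ.le]
      _ = (2*(n:ℝ)+1) * Real.exp (π * τ.im * n) := by
          rw [Finset.sum_const, Finset.card_range]
          push_cast
          ring
  calc ‖Gf z τ n‖ = ‖qf τ n‖ * ‖(Af z)⁻¹^(2*n) * ∑ k ∈ range (2*n+1), (-((Af z)^2))^k‖ := by
        rw [Gf, norm_mul]
    _ ≤ ‖qf τ n‖ * ((2*(n:ℝ)+1) * Real.exp (π * τ.im * n)) :=
        mul_le_mul_of_nonneg_left hTb (norm_nonneg _)
    _ = (2*(n:ℝ)+1) * Real.exp (-(π * τ.im * (n:ℝ)^2)) * Real.exp (-(π * τ.im / 4)) := by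
        have hh : ∀ a b : ℝ, ∀ c : ℝ, rexp a * (c * rexp b) = c * rexp (a+b) := by
          intros a b c; rw [Real.exp_add]; ring
        rw [norm_qf, hh]
        conv_rhs => rw [mul_assoc, ← Real.exp_add]
        congr 2
        ring

lemma two_n_three (n : ℕ) : (2*((n:ℝ)+1)+1) ≤ 3 * 2^n := by
  have h : (n+1 : ℕ) ≤ 2^n := Nat.lt_two_pow_self
  have h2 : ((n:ℝ)+1) ≤ 2^n := by exact_mod_cast h
  nlinarith

lemma AA_ne_zero (z : ℂ) (hzint : ∀ n : ℤ, z ≠ (n:ℂ)) : Af z + (Af z)⁻¹ ≠ 0 := by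
  intro h
  have hAne : Af z ≠ 0 := Complex.exp_ne_zero _
  have h2 : (Af z)^2 = -1 := by
    have h' := congrArg (· * Af z) h
    simp only [add_mul, zero_mul, inv_mul_cancel₀ hAne] at h'
    linear_combination h'
  have h3 : (Af z)^2 = -cexp (2*(π:ℂ)*I*z) := by
    rw [Af, ← Complex.exp_nat_mul, show ((2:ℕ):ℂ) * ((π:ℂ)*I*(z+1/2)) =
      2*(π:ℂ)*I*z + (π:ℂ)*I from by push_cast; ring, Complex.exp_add, Complex.exp_pi_mul_I]
    ring
  have h4 : cexp (2*(π:ℂ)*I*z) = 1 := by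
    have := h3.symm.trans h2
    linear_combination -this
  rw [Complex.exp_eq_one_iff] at h4
  obtain ⟨k, hk⟩ := h4
  apply hzint k
  have hpi : (π:ℂ) ≠ 0 := by exact_mod_cast Real.pi_ne_zero
  have h5 := mul_left_cancel₀ (by simp [hpi, Complex.I_ne_zero] : 2*(π:ℂ)*I ≠ 0)
    (show 2*(π:ℂ)*I*z = 2*(π:ℂ)*I*(k:ℂ) from by rw [hk]; ring)
  exact h5

lemma jtheta_ne_zero_base (τ z : ℂ) (ht : (0.7:ℝ) ≤ τ.im) (hz : |z.im| ≤ τ.im / 2)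
    (hzint : ∀ n : ℤ, z ≠ (n:ℂ)) : jtheta z τ ≠ 0 := by
  have hτ : 0 < τ.im := lt_of_lt_of_le (by norm_num) ht
  have hπ : (0:ℝ) < π := Real.pi_pos
  have hAA := AA_ne_zero z hzint
  -- summability
  have httsum := summable_ttf z hτ
  have hFsum1 : Summable (fun n : ℕ => ttf z τ n) :=
    httsum.comp_injective (fun a b h => by exact_mod_cast h)
  have hFsum2 : Summable (fun n : ℕ => ttf z τ (-(n+1))) :=
    httsum.comp_injective (fun a b h => by omega)
  have hGsum : Summable (Gf z τ) := by
    rw [← summable_mul_left_iff hAA]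
    exact (hFsum1.add hFsum2).congr (fun n => (ttf_pair z τ n))
  have hjt : jtheta z τ = (Af z + (Af z)⁻¹) * ∑' n : ℕ, Gf z τ n := by
    rw [jtheta_eq_ttf, tsum_of_nat_of_neg_add_one hFsum1 hFsum2, ← Summable.tsum_add hFsum1 hFsum2,
      ← tsum_mul_left]
    exact tsum_congr (ttf_pair z τ)
  -- β bounds
  set β := Real.exp (-(π * τ.im)) with hβ
  have hβpos : 0 < β := Real.exp_pos _
  have hβ14 : β ≤ 0.14 := by
    have h1 : β ≤ Real.exp (-2) := by
      apply Real.exp_le_exp.mpr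
      nlinarith [Real.pi_gt_three]
    have h2 : (7.15:ℝ) ≤ Real.exp 2 := by
      have h3 : Real.exp 2 = Real.exp 1 * Real.exp 1 := by
        rw [← Real.exp_add]; norm_num
      nlinarith [Real.exp_one_gt_d9]
    have h4 : Real.exp (-2) ≤ 0.14 := by
      rw [Real.exp_neg]
      rw [inv_le_comm₀ (Real.exp_pos 2) (by norm_num : (0:ℝ) < 0.14)]
      linarith
    linarith
  have hβ1 : β ≤ 1 := by linarith
  have h2β : 2*β^2 < 1 := by nlinarith
  set e4 := Real.exp (-(π * τ.im / 4)) with he4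
  have he4pos : 0 < e4 := Real.exp_pos _
  -- tail bound
  have hGb : ∀ n : ℕ, ‖Gf z τ (n+1)‖ ≤ (3 * β * e4) * (2*β^2)^n := by
    intro n
    have h1 := norm_Gf_le z τ hz hτ (n+1)
    have h2 : Real.exp (-(π * τ.im * ((n+1:ℕ):ℝ)^2)) = β^((n+1)^2) := by
      rw [hβ, ← Real.exp_nat_mul]
      congr 1
      push_cast
      ring
    have h3 : β^((n+1)^2) ≤ β^(2*n+1) :=
      pow_le_pow_of_le_one hβpos.le hβ1 (by nlinarith)
    have h4 : (2*((n:ℝ)+1)+1) * β^(2*n+1) * e4 ≤ (3 * 2^n) * (β^(2*n+1)) * e4 := by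
      have h6 := two_n_three n
      have hb := pow_nonneg hβpos.le (2*n+1)
      exact mul_le_mul_of_nonneg_right (mul_le_mul_of_nonneg_right h6 hb) he4pos.le
    have h5 : (3 * (2:ℝ)^n) * (β^(2*n+1)) * e4 = (3 * β * e4) * (2*β^2)^n := by
      rw [mul_pow, pow_succ, pow_mul]
      ring
    calc ‖Gf z τ (n+1)‖ ≤ (2*((n+1:ℕ):ℝ)+1) * Real.exp (-(π * τ.im * ((n+1:ℕ):ℝ)^2)) * e4 := h1
      _ = (2*((n:ℝ)+1)+1) * β^((n+1)^2) * e4 := by rw [h2]; push_cast; ring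
      _ ≤ (2*((n:ℝ)+1)+1) * β^(2*n+1) * e4 := by
          have hc : (0:ℝ) ≤ 2*((n:ℝ)+1)+1 := by positivity
          exact mul_le_mul_of_nonneg_right (mul_le_mul_of_nonneg_left h3 hc) he4pos.le
      _ ≤ (3 * 2^n) * (β^(2*n+1)) * e4 := h4
      _ = (3 * β * e4) * (2*β^2)^n := h5
  have hmaj : Summable (fun n : ℕ => (3 * β * e4) * (2*β^2)^n) :=
    (summable_geometric_of_lt_one (by positivity) h2β).mul_left _
  have hnorms : Summable (fun n : ℕ => ‖Gf z τ (n+1)‖) :=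
    Summable.of_nonneg_of_le (fun n => norm_nonneg _) hGb hmaj
  have htail : ‖∑' n : ℕ, Gf z τ (n+1)‖ ≤ (3 * β * e4) * (1 - 2*β^2)⁻¹ := by
    calc ‖∑' n : ℕ, Gf z τ (n+1)‖ ≤ ∑' n : ℕ, ‖Gf z τ (n+1)‖ := norm_tsum_le_tsum_norm hnorms
      _ ≤ ∑' n : ℕ, (3 * β * e4) * (2*β^2)^n := Summable.tsum_le_tsum hGb hnorms hmaj
      _ = (3 * β * e4) * (1 - 2*β^2)⁻¹ := by
          rw [tsum_mul_left, tsum_geometric_of_lt_one (by positivity) h2β]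
  have hG0 : ‖Gf z τ 0‖ = e4 := by
    have h0 : Gf z τ 0 = qf τ 0 := by
      simp [Gf]
    rw [h0, norm_qf, he4]
    congr 1
    push_cast
    ring
  have hlt : (3 * β * e4) * (1 - 2*β^2)⁻¹ < e4 := by
    have hd : 0 < 1 - 2*β^2 := by linarith
    rw [mul_inv_lt_iff₀ hd]
    nlinarith [mul_lt_mul_of_pos_left (show 3*β < 1-2*β^2 by nlinarith) he4pos]
  rw [hjt]
  apply mul_ne_zero hAA
  intro h0
  rw [Summable.tsum_eq_zero_add hGsum, add_eq_zero_iff_eq_neg] at h0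
  have : ‖Gf z τ 0‖ = ‖∑' n : ℕ, Gf z τ (n+1)‖ := by rw [h0, norm_neg]
  rw [hG0] at this
  linarith [lt_of_le_of_lt htail hlt, this.le, this.ge]
lemma jtheta_T (z τ : ℂ) (k : ℤ) : jtheta z (τ + k) = cexp ((π:ℂ) * I * k / 4) * jtheta z τ := by
  rw [jtheta, jtheta, ← tsum_mul_left]
  refine tsum_congr fun n => ?_
  rw [← Complex.exp_add]
  have he : Even ((n^2 + n) * k) := by
    have h1 : Even (n^2 + n) := by simpa [sq, mul_add, mul_one] using Int.even_mul_succ_self n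
    exact h1.mul_right k
  obtain ⟨m, hm⟩ := he
  have h : ((π:ℂ) * I * k / 4 + (π * I * ((n:ℂ) + 1/2) ^ 2 * τ +
      2 * π * I * ((n:ℂ) + 1/2) * (z + 1/2))) =
      (π * I * ((n:ℂ) + 1/2) ^ 2 * (τ + k) + 2 * π * I * ((n:ℂ) + 1/2) * (z + 1/2))
      - (((n^2 + n) * k : ℤ) : ℂ) * ((2 * π * I) / 2) := by push_cast; ring
  rw [h, hm, Complex.exp_sub]
  have : ((m + m : ℤ) : ℂ) * (2 * (π:ℂ) * I / 2) = (m : ℤ) * (2 * π * I) := by push_cast; ring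
  rw [this, Complex.exp_int_mul_two_pi_mul_I, div_one]

lemma jtheta_shift (z τ : ℂ) (m : ℤ) : jtheta (z + m * τ) τ =
    cexp (-(π:ℂ) * I * m^2 * τ - 2 * π * I * m * (z + 1/2)) * jtheta z τ := by
  rw [jtheta, jtheta]
  conv_rhs => erw [← tsum_mul_left, ← (Equiv.addRight m).tsum_eq]
  refine tsum_congr fun n => ?_
  rw [← Complex.exp_add, Equiv.coe_addRight]
  congr 1
  push_cast
  ring

lemma jtheta_eq_jacobiTheta₂ (z τ : ℂ) : jtheta z τ =
    cexp ((π:ℂ) * I * τ / 4 + (π:ℂ) * I * (z + 1/2)) * jacobiTheta₂ (z + 1/2 + τ/2) τ := by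
  rw [jtheta, jacobiTheta₂, ← tsum_mul_left]
  refine tsum_congr fun n => ?_
  rw [jacobiTheta₂_term, ← Complex.exp_add]
  congr 1
  ring

lemma jtheta_S (τ : ℂ) (hτ : 0 < τ.im) (z : ℂ)
    (h : jtheta ((z+1)/τ) (-1/τ) ≠ 0) : jtheta z τ ≠ 0 := by
  have ht0 : τ ≠ 0 := fun h0 => by simp [h0] at hτ
  rw [jtheta_eq_jacobiTheta₂] at h
  rw [jtheta_eq_jacobiTheta₂]
  refine mul_ne_zero (Complex.exp_ne_zero _) ?_
  have h2 := right_ne_zero_of_mul h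
  rw [jacobiTheta₂_functional_equation ((z+1)/τ + 1/2 + (-1/τ)/2) (-1/τ)] at h2
  have h3 := right_ne_zero_of_mul h2
  have e1 : (-1 : ℂ)/(-1/τ) = τ := by field_simp
  have e2 : ((z+1)/τ + 1/2 + (-1/τ)/2) / (-1/τ) = -(z + 1/2 + τ/2) := by
    field_simp; ring
  rw [e1, e2, jacobiTheta₂_neg_left] at h3
  exact h3

lemma jtheta_ne_zero_direct (τ z : ℂ) (ht : (0.7:ℝ) ≤ τ.im)
    (hz : ∀ m n : ℤ, z ≠ (m:ℂ)*τ + (n:ℂ)) : jtheta z τ ≠ 0 := by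
  have hτ : 0 < τ.im := lt_of_lt_of_le (by norm_num) ht
  set m : ℤ := round (z.im / τ.im) with hm
  set z' : ℂ := z - (m:ℂ)*τ with hz'
  have him : |z'.im| ≤ τ.im / 2 := by
    have h1 : z'.im = z.im - (m:ℝ) * τ.im := by
      rw [hz']; simp [Complex.sub_im, Complex.mul_im]
    have h2 : |z.im / τ.im - round (z.im / τ.im)| ≤ 1/2 := abs_sub_round _
    rw [h1]
    have h3 : z.im - (m:ℝ)*τ.im = (z.im/τ.im - (m:ℝ)) * τ.im := by
      field_simp
    rw [h3, abs_mul, abs_of_pos hτ, hm]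
    calc |z.im/τ.im - (round (z.im/τ.im) : ℝ)| * τ.im ≤ (1/2) * τ.im := by
          exact mul_le_mul_of_nonneg_right h2 hτ.le
      _ = τ.im / 2 := by ring
  have hzint : ∀ n : ℤ, z' ≠ (n:ℂ) := by
    intro n hn
    exact hz m n (by rw [← hn, hz']; ring)
  have hbase := jtheta_ne_zero_base τ z' ht him hzint
  have hs : jtheta (z' + (m:ℂ)*τ) τ =
      cexp (-(π:ℂ)*I*(m:ℂ)^2*τ - 2*(π:ℂ)*I*(m:ℂ)*(z'+1/2)) * jtheta z' τ := jtheta_shift z' τ m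
  have hz'' : z' + (m:ℂ)*τ = z := by rw [hz']; ring
  rw [hz''] at hs
  rw [hs]
  exact mul_ne_zero (Complex.exp_ne_zero _) hbase

lemma jtheta_ne_zero_aux : ∀ k : ℕ, ∀ τ z : ℂ, 0 < τ.im → (0.7:ℝ) ≤ (4/3)^k * τ.im →
    (∀ m n : ℤ, z ≠ (m:ℂ)*τ + (n:ℂ)) → jtheta z τ ≠ 0 := by
  intro k
  induction k with
  | zero =>
    intro τ z hτ hk hz
    rw [pow_zero, one_mul] at hk
    exact jtheta_ne_zero_direct τ z hk hz
  | succ k ih =>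
    intro τ z hτ hk hz
    by_cases hcase : (0.7:ℝ) ≤ τ.im
    · exact jtheta_ne_zero_direct τ z hcase hz
    push_neg at hcase
    have ht0 : τ ≠ 0 := fun h0 => by simp [h0] at hτ
    set r : ℤ := round τ.re with hr
    set τ₁ : ℂ := τ - (r:ℂ) with hτ₁
    have hτ₁im : τ₁.im = τ.im := by simp [hτ₁]
    have hτ₁re : |τ₁.re| ≤ 1/2 := by
      have : τ₁.re = τ.re - (r:ℝ) := by simp [hτ₁]
      rw [this, hr]
      exact abs_sub_round _
    have hτ₁pos : 0 < τ₁.im := by rw [hτ₁im]; exact hτ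
    have ht₁0 : τ₁ ≠ 0 := fun h0 => by rw [h0] at hτ₁pos; simp at hτ₁pos
    have hz₁ : ∀ m n : ℤ, z ≠ (m:ℂ)*τ₁ + (n:ℂ) := by
      intro m n hcon
      apply hz m (n - m*r)
      rw [hcon, hτ₁]
      push_cast
      ring
    -- it suffices to prove jtheta z τ₁ ≠ 0
    suffices h1 : jtheta z τ₁ ≠ 0 by
      have hT := jtheta_T z τ₁ r
      have : τ₁ + (r:ℂ) = τ := by rw [hτ₁]; ring
      rw [this] at hT
      rw [hT]
      exact mul_ne_zero (Complex.exp_ne_zero _) h1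
    apply jtheta_S τ₁ hτ₁pos
    -- the new point and τ₂ = -1/τ₁
    set τ₂ : ℂ := -1/τ₁ with hτ₂
    have hnormsq : Complex.normSq τ₁ ≤ 0.74 := by
      rw [Complex.normSq_apply]
      have h2 := abs_le.mp hτ₁re
      have h3 : τ₁.im < 0.7 := by rw [hτ₁im]; exact hcase
      nlinarith [hτ₁pos]
    have hτ₂im : τ₂.im = τ₁.im / Complex.normSq τ₁ := by
      rw [hτ₂, neg_div, Complex.neg_im, Complex.div_im]
      simp [Complex.normSq_apply]
    have hnsq_pos : 0 < Complex.normSq τ₁ := Complex.normSq_pos.mpr ht₁0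
    have hτ₂pos : 0 < τ₂.im := by
      rw [hτ₂im]; exact div_pos hτ₁pos hnsq_pos
    have hgrow : (4/3:ℝ) * τ₁.im ≤ τ₂.im := by
      rw [hτ₂im, le_div_iff₀ hnsq_pos]
      nlinarith [hτ₁pos]
    apply ih τ₂ ((z+1)/τ₁) hτ₂pos
    · have hstep : (4/3:ℝ)^(k+1) * τ.im ≤ (4/3)^k * τ₂.im := by
        rw [pow_succ]
        calc (4/3:ℝ)^k * (4/3) * τ.im = (4/3)^k * ((4/3) * τ₁.im) := by rw [hτ₁im]; ring
          _ ≤ (4/3)^k * τ₂.im := mul_le_mul_of_nonneg_left hgrow (by positivity)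
      linarith [hk]
    · intro m n hcon
      apply hz₁ n (-m-1)
      have hmul : z + 1 = ((m:ℂ)*τ₂ + n) * τ₁ := by
        rw [← hcon, div_mul_cancel₀ _ ht₁0]
      have hτ₂τ₁ : τ₂ * τ₁ = -1 := by rw [hτ₂]; field_simp
      push_cast
      linear_combination hmul + (m:ℂ) * hτ₂τ₁

lemma jtheta_ne_zero {τ : ℂ} (hτ : 0 < τ.im) (z : ℂ)
    (hz : ∀ m n : ℤ, z ≠ (m:ℂ)*τ + (n:ℂ)) : jtheta z τ ≠ 0 := by
  obtain ⟨k, hk⟩ := pow_unbounded_of_one_lt ((0.7:ℝ)/τ.im) (by norm_num : (1:ℝ) < 4/3)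
  apply jtheta_ne_zero_aux k τ z hτ ?_ hz
  rw [div_lt_iff₀ hτ] at hk
  linarith

lemma denom_ne_zero (τ : ℂ) (u : ℂ) (hu : ∀ m n : ℤ, u ≠ (m:ℂ)*τ + (n:ℂ)) (n : ℤ) :
    1 - cexp (2*(π:ℂ)*I*(n:ℂ)*τ + 2*(π:ℂ)*I*u) ≠ 0 := by
  rw [sub_ne_zero]
  intro h
  rw [eq_comm, Complex.exp_eq_one_iff] at h
  obtain ⟨k, hk⟩ := h
  apply hu (-n) k
  have hpi : (π:ℂ) ≠ 0 := by exact_mod_cast Real.pi_ne_zero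
  have : 2*(π:ℂ)*I*((n:ℂ)*τ + u) = 2*(π:ℂ)*I*(k:ℂ) := by linear_combination hk
  have h2 := mul_left_cancel₀ (by simp [hpi, Complex.I_ne_zero] : 2*(π:ℂ)*I ≠ 0) this
  push_cast
  linear_combination h2

lemma norm_w (τ u : ℂ) (n : ℤ) :
    ‖cexp (2*(π:ℂ)*I*(n:ℂ)*τ + 2*(π:ℂ)*I*u)‖ = Real.exp (-2*π*((n:ℝ)*τ.im + u.im)) := by
  have h : 2*(π:ℂ)*I*(n:ℂ)*τ + 2*(π:ℂ)*I*u = ((2*π : ℝ) : ℂ) * (((n:ℂ)*τ + u) * I) := by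
    push_cast; ring
  rw [h, Complex.norm_exp]
  congr 1
  simp [Complex.mul_re, Complex.add_im, Complex.mul_im]
  ring

lemma denom_bound (τ : ℂ) (hτ : 0 < τ.im) (u : ℂ) (hu : ∀ m n : ℤ, u ≠ (m:ℂ)*τ + (n:ℂ)) :
    ∃ c > 0, ∀ n : ℤ, c ≤ ‖1 - cexp (2*(π:ℂ)*I*(n:ℂ)*τ + 2*(π:ℂ)*I*u)‖ := by
  set g : ℤ → ℝ := fun n => ‖1 - cexp (2*(π:ℂ)*I*(n:ℂ)*τ + 2*(π:ℂ)*I*u)‖ with hg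
  have hgpos : ∀ n, 0 < g n := fun n => norm_pos_iff.mpr (denom_ne_zero τ u hu n)
  have hexp1 : (2:ℝ) ≤ Real.exp 1 := by
    have := Real.exp_one_gt_d9; linarith
  have hlarge : ∀ n : ℤ, (1 - u.im)/τ.im ≤ (n:ℝ) → (1:ℝ)/2 ≤ g n := by
    intro n hn
    have h1 : (1:ℝ) - u.im ≤ n * τ.im := (div_le_iff₀ hτ).mp hn
    have h2 : Real.exp (-2*π*((n:ℝ)*τ.im + u.im)) ≤ 1/2 := by
      have hx : -2*π*((n:ℝ)*τ.im + u.im) ≤ -1 := by nlinarith [Real.pi_gt_three]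
      have h3 : Real.exp (-2*π*((n:ℝ)*τ.im + u.im)) ≤ Real.exp (-1) := Real.exp_le_exp.mpr hx
      have h4 : Real.exp (-1) ≤ 1/2 := by
        rw [Real.exp_neg]
        rw [inv_le_comm₀ (Real.exp_pos 1) (by norm_num : (0:ℝ) < 1/2)]
        linarith
      linarith
    calc (1:ℝ)/2 = 1 - 1/2 := by norm_num
      _ ≤ ‖(1:ℂ)‖ - ‖cexp (2*(π:ℂ)*I*(n:ℂ)*τ + 2*(π:ℂ)*I*u)‖ := by
          rw [norm_one, norm_w]; linarith
      _ ≤ g n := norm_sub_norm_le _ _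
  have hsmall : ∀ n : ℤ, (n:ℝ) ≤ (-1 - u.im)/τ.im → (1:ℝ)/2 ≤ g n := by
    intro n hn
    have h1 : (n:ℝ) * τ.im ≤ -1 - u.im := by
      have := mul_le_mul_of_nonneg_right hn (le_of_lt hτ)
      rwa [div_mul_cancel₀ _ (ne_of_gt hτ)] at this
    have h2 : (2:ℝ) ≤ Real.exp (-2*π*((n:ℝ)*τ.im + u.im)) := by
      have hx : (1:ℝ) ≤ -2*π*((n:ℝ)*τ.im + u.im) := by nlinarith [Real.pi_gt_three]
      calc (2:ℝ) ≤ Real.exp 1 := hexp1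
        _ ≤ _ := Real.exp_le_exp.mpr hx
    calc (1:ℝ)/2 ≤ ‖cexp (2*(π:ℂ)*I*(n:ℂ)*τ + 2*(π:ℂ)*I*u)‖ - ‖(1:ℂ)‖ := by
          rw [norm_one, norm_w]; linarith
      _ ≤ ‖cexp (2*(π:ℂ)*I*(n:ℂ)*τ + 2*(π:ℂ)*I*u) - 1‖ := norm_sub_norm_le _ _
      _ = g n := by rw [hg]; rw [norm_sub_rev]
  have hS : {n : ℤ | g n < 1/2}.Finite := by
    apply Set.Finite.subset (Set.finite_Icc (⌈(-1 - u.im)/τ.im⌉) (⌊(1 - u.im)/τ.im⌋))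
    intro n hn
    simp only [Set.mem_setOf_eq] at hn
    simp only [Set.mem_Icc]
    constructor
    · rw [Int.ceil_le]
      by_contra hcon
      push_neg at hcon
      exact absurd (hsmall n hcon.le) (by linarith)
    · rw [Int.le_floor]
      by_contra hcon
      push_neg at hcon
      exact absurd (hlarge n hcon.le) (by linarith)
  by_cases hT : hS.toFinset.Nonempty
  · refine ⟨min (1/2) (hS.toFinset.inf' hT g), ?_, ?_⟩
    · apply lt_min (by norm_num)
      obtain ⟨n0, -, hn0⟩ := Finset.exists_mem_eq_inf' hT g
      rw [hn0]; exact hgpos n0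
    · intro n
      by_cases hn : g n < 1/2
      · exact le_trans (min_le_right _ _)
          (Finset.inf'_le g (hS.mem_toFinset.mpr (by simpa using hn)))
      · push_neg at hn
        exact le_trans (min_le_left _ _) hn
  · refine ⟨1/2, by norm_num, fun n => ?_⟩
    by_contra hcon
    push_neg at hcon
    exact hT ⟨n, hS.mem_toFinset.mpr (by simpa using hcon)⟩

lemma summable_term_div (τ : ℂ) (hτ : 0 < τ.im) (z₀ : ℂ) (den : ℤ → ℂ) (c : ℝ) (hc : 0 < c)
    (hden : ∀ n, c ≤ ‖den n‖) :
    Summable (fun n : ℤ => jacobiTheta₂_term n z₀ τ / den n) := by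
  apply Summable.of_norm_bounded (g := fun n => ‖jacobiTheta₂_term n z₀ τ‖ * c⁻¹)
  · exact (summable_norm_iff.mpr ((summable_jacobiTheta₂_term_iff z₀ τ).mpr hτ)).mul_right _
  · intro n
    rw [norm_div, div_eq_mul_inv]
    exact mul_le_mul_of_nonneg_left
      (inv_anti₀ hc (hden n)) (norm_nonneg _)

-- numerator identity
lemma E1 (τ v : ℂ) (n : ℤ) : (-1:ℂ)^n * cexp ((π:ℂ)*I*((n:ℂ)^2+(n:ℂ))*τ + 2*(π:ℂ)*I*(n:ℂ)*v)
    = jacobiTheta₂_term n (v + 1/2 + τ/2) τ := by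
  have h1 : (-1:ℂ)^n = cexp ((n:ℂ) * ((π:ℂ)*I)) := by
    rw [Complex.exp_int_mul, Complex.exp_pi_mul_I]
  rw [h1, jacobiTheta₂_term, ← Complex.exp_add]
  congr 1
  ring


/-- The (normalized) Lerch sum
`μ(u,v;τ) = (e^{πiu}/θ(v;τ)) Σ_{n∈ℤ} (-1)ⁿ e^{πi(n²+n)τ + 2πinv}/(1 - e^{2πinτ+2πiu})`. -/
noncomputable def lerchMu (u v τ : ℂ) : ℂ :=
  Complex.exp ((π : ℂ) * Complex.I * u) / jtheta v τ *
    ∑' n : ℤ, (-1 : ℂ) ^ n *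
      Complex.exp ((π : ℂ) * Complex.I * ((n : ℂ) ^ 2 + (n : ℂ)) * τ +
        2 * (π : ℂ) * Complex.I * (n : ℂ) * v) /
      (1 - Complex.exp (2 * (π : ℂ) * Complex.I * (n : ℂ) * τ + 2 * (π : ℂ) * Complex.I * u))

/-- `μ(u,v) + e^{-2πi(u-v)-πiτ} μ(u+τ,v) = -i e^{-πi(u-v) - πiτ/4}`. -/
theorem lerchMu_elliptic (τ : ℂ) (hτ : 0 < τ.im) (u v : ℂ)
    (hu : ∀ m n : ℤ, u ≠ (m : ℂ) * τ + (n : ℂ))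
    (hv : ∀ m n : ℤ, v ≠ (m : ℂ) * τ + (n : ℂ)) :
    lerchMu u v τ +
      Complex.exp (-2 * (π : ℂ) * Complex.I * (u - v) - (π : ℂ) * Complex.I * τ) *
        lerchMu (u + τ) v τ =
      -Complex.I * Complex.exp (-(π : ℂ) * Complex.I * (u - v) - (π : ℂ) * Complex.I * τ / 4) := by
  obtain ⟨c, hc, hcb⟩ := denom_bound τ hτ u hu
  have hd : ∀ n : ℤ, 1 - cexp (2*(π:ℂ)*I*(n:ℂ)*τ + 2*(π:ℂ)*I*u) ≠ 0 := denom_ne_zero τ u hu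
  have hRne : cexp (2*(π:ℂ)*I*u) ≠ 0 := Complex.exp_ne_zero _
  have hVne : cexp (2*(π:ℂ)*I*v) ≠ 0 := Complex.exp_ne_zero _
  -- step 1 : first sum
  have hS1 : (∑' n : ℤ, (-1 : ℂ) ^ n *
      cexp ((π : ℂ) * I * ((n : ℂ) ^ 2 + (n : ℂ)) * τ + 2 * (π : ℂ) * I * (n : ℂ) * v) /
      (1 - cexp (2 * (π : ℂ) * I * (n : ℂ) * τ + 2 * (π : ℂ) * I * u)))
      = ∑' n : ℤ, jacobiTheta₂_term n (v + 1/2 + τ/2) τ /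
        (1 - cexp (2*(π:ℂ)*I*(n:ℂ)*τ + 2*(π:ℂ)*I*u)) := by
    refine tsum_congr fun n => ?_
    rw [E1]
  -- step 2 : second sum, reindexed
  have hS2 : (∑' n : ℤ, (-1 : ℂ) ^ n *
      cexp ((π : ℂ) * I * ((n : ℂ) ^ 2 + (n : ℂ)) * τ + 2 * (π : ℂ) * I * (n : ℂ) * v) /
      (1 - cexp (2 * (π : ℂ) * I * (n : ℂ) * τ + 2 * (π : ℂ) * I * (u + τ))))
      = ∑' n : ℤ, jacobiTheta₂_term (n-1) (v + 1/2 + τ/2) τ /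
        (1 - cexp (2*(π:ℂ)*I*(n:ℂ)*τ + 2*(π:ℂ)*I*u)) := by
    rw [← (Equiv.subRight (1:ℤ)).tsum_eq]
    refine tsum_congr fun n => ?_
    simp only [Equiv.subRight_apply]
    rw [E1 τ v (n-1)]
    have harg : (2*(π:ℂ)*I*((n-1 : ℤ):ℂ)*τ + 2*(π:ℂ)*I*(u+τ))
        = (2*(π:ℂ)*I*(n:ℂ)*τ + 2*(π:ℂ)*I*u) := by push_cast; ring
    rw [harg]
  -- summability
  have hsf : Summable (fun n : ℤ => jacobiTheta₂_term n (v + 1/2 + τ/2) τ /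
      (1 - cexp (2*(π:ℂ)*I*(n:ℂ)*τ + 2*(π:ℂ)*I*u))) :=
    summable_term_div τ hτ _ _ c hc hcb
  have hsB : Summable (fun n : ℤ => jacobiTheta₂_term (n-1) (v + 1/2 + τ/2) τ /
      (1 - cexp (2*(π:ℂ)*I*(n:ℂ)*τ + 2*(π:ℂ)*I*u))) := by
    have h1 : Summable (fun n : ℤ => jacobiTheta₂_term n (v + 1/2 + τ/2) τ /
        (1 - cexp (2*(π:ℂ)*I*((n+1 : ℤ):ℂ)*τ + 2*(π:ℂ)*I*u))) :=
      summable_term_div τ hτ _ _ c hc (fun n => hcb (n+1))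
    apply (Equiv.addRight (1:ℤ)).summable_iff.mp
    refine h1.congr fun n => ?_
    simp only [Function.comp, Equiv.coe_addRight, add_sub_cancel_right]
  -- key identity
  have key : ∀ n : ℤ, jacobiTheta₂_term n (v + 1/2 + τ/2) τ /
        (1 - cexp (2*(π:ℂ)*I*(n:ℂ)*τ + 2*(π:ℂ)*I*u)) +
      cexp (2*(π:ℂ)*I*v - 2*(π:ℂ)*I*u) * (jacobiTheta₂_term (n-1) (v + 1/2 + τ/2) τ /
        (1 - cexp (2*(π:ℂ)*I*(n:ℂ)*τ + 2*(π:ℂ)*I*u)))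
      = -(cexp (2*(π:ℂ)*I*u))⁻¹ * jacobiTheta₂_term n (v + 1/2 - τ/2) τ := by
    intro n
    have hP : jacobiTheta₂_term n (v + 1/2 + τ/2) τ
        = cexp (2*(π:ℂ)*I*(n:ℂ)*τ) * jacobiTheta₂_term n (v + 1/2 - τ/2) τ := by
      rw [jacobiTheta₂_term, jacobiTheta₂_term, ← Complex.exp_add]
      congr 1
      ring
    have hQ : jacobiTheta₂_term (n-1) (v + 1/2 + τ/2) τ
        = cexp (-((π:ℂ)*I)) * (cexp (2*(π:ℂ)*I*v))⁻¹ *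
          jacobiTheta₂_term n (v + 1/2 - τ/2) τ := by
      rw [jacobiTheta₂_term, jacobiTheta₂_term, ← Complex.exp_neg, ← Complex.exp_add,
        ← Complex.exp_add]
      congr 1
      push_cast
      ring
    have hneg : cexp (-((π:ℂ)*I)) = -1 := by
      rw [Complex.exp_neg, Complex.exp_pi_mul_I]
      norm_num
    have hw : cexp (2*(π:ℂ)*I*(n:ℂ)*τ + 2*(π:ℂ)*I*u)
        = cexp (2*(π:ℂ)*I*(n:ℂ)*τ) * cexp (2*(π:ℂ)*I*u) := Complex.exp_add _ _
    have hC : cexp (2*(π:ℂ)*I*v - 2*(π:ℂ)*I*u)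
        = cexp (2*(π:ℂ)*I*v) * (cexp (2*(π:ℂ)*I*u))⁻¹ := by
      rw [Complex.exp_sub, div_eq_mul_inv]
    rw [hP, hQ, hneg, hC, hw]
    have hD : (1 : ℂ) - cexp (2*(π:ℂ)*I*(n:ℂ)*τ) * cexp (2*(π:ℂ)*I*u) ≠ 0 := by
      rw [← hw]; exact hd n
    field_simp
    ring
  -- combine the two sums
  have hcomb : (∑' n : ℤ, jacobiTheta₂_term n (v + 1/2 + τ/2) τ /
        (1 - cexp (2*(π:ℂ)*I*(n:ℂ)*τ + 2*(π:ℂ)*I*u))) +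
      cexp (2*(π:ℂ)*I*v - 2*(π:ℂ)*I*u) * ∑' n : ℤ, jacobiTheta₂_term (n-1) (v + 1/2 + τ/2) τ /
        (1 - cexp (2*(π:ℂ)*I*(n:ℂ)*τ + 2*(π:ℂ)*I*u))
      = -(cexp (2*(π:ℂ)*I*u))⁻¹ * jacobiTheta₂ (v + 1/2 - τ/2) τ := by
    rw [← tsum_mul_left, ← Summable.tsum_add hsf (hsB.mul_left _)]
    rw [jacobiTheta₂, ← tsum_mul_left]
    exact tsum_congr key
  -- theta relations
  have hθ := jtheta_eq_jacobiTheta₂ v τ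
  have hθne := jtheta_ne_zero hτ v hv
  have hTne : jacobiTheta₂ (v + 1/2 + τ/2) τ ≠ 0 := by
    rw [hθ] at hθne
    exact right_ne_zero_of_mul hθne
  have hz₁θ : jacobiTheta₂ (v + 1/2 - τ/2) τ
      = cexp ((π:ℂ)*I*(τ + 2*(v + 1/2 - τ/2))) * jacobiTheta₂ (v + 1/2 + τ/2) τ := by
    have h := jacobiTheta₂_add_left' (v + 1/2 - τ/2) τ
    have hzz : v + 1/2 - τ/2 + τ = v + 1/2 + τ/2 := by ring
    rw [hzz] at h
    rw [h, ← mul_assoc, ← Complex.exp_add]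
    rw [show (π:ℂ)*I*(τ + 2*(v + 1/2 - τ/2)) + -(π:ℂ)*I*(τ + 2*(v + 1/2 - τ/2)) = 0 from by
      ring, Complex.exp_zero, one_mul]
  have hI2 : cexp ((π:ℂ)*I/2) = I := by
    rw [show (π:ℂ)*I/2 = (↑(π/2 : ℝ))*I from by push_cast; ring, Complex.exp_mul_I]
    rw [← Complex.ofReal_cos, ← Complex.ofReal_sin]
    rw [Real.cos_pi_div_two, Real.sin_pi_div_two]
    simp
  -- assemble
  rw [lerchMu, lerchMu, hS1, hS2]
  have hKb : cexp (-2*(π:ℂ)*I*(u-v) - (π:ℂ)*I*τ) * cexp ((π:ℂ)*I*(u+τ))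
      = cexp ((π:ℂ)*I*u) * cexp (2*(π:ℂ)*I*v - 2*(π:ℂ)*I*u) := by
    rw [← Complex.exp_add, ← Complex.exp_add]
    congr 1
    ring
  have step1 : cexp ((π:ℂ)*I*u) / jtheta v τ * (∑' n : ℤ, jacobiTheta₂_term n (v + 1/2 + τ/2) τ /
        (1 - cexp (2*(π:ℂ)*I*(n:ℂ)*τ + 2*(π:ℂ)*I*u))) +
      cexp (-2*(π:ℂ)*I*(u-v) - (π:ℂ)*I*τ) * (cexp ((π:ℂ)*I*(u+τ)) / jtheta v τ *
        ∑' n : ℤ, jacobiTheta₂_term (n-1) (v + 1/2 + τ/2) τ /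
        (1 - cexp (2*(π:ℂ)*I*(n:ℂ)*τ + 2*(π:ℂ)*I*u)))
      = (cexp ((π:ℂ)*I*u) / jtheta v τ) *
        ((∑' n : ℤ, jacobiTheta₂_term n (v + 1/2 + τ/2) τ /
          (1 - cexp (2*(π:ℂ)*I*(n:ℂ)*τ + 2*(π:ℂ)*I*u))) +
        cexp (2*(π:ℂ)*I*v - 2*(π:ℂ)*I*u) *
          ∑' n : ℤ, jacobiTheta₂_term (n-1) (v + 1/2 + τ/2) τ /
          (1 - cexp (2*(π:ℂ)*I*(n:ℂ)*τ + 2*(π:ℂ)*I*u))) := by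
    linear_combination ((∑' n : ℤ, jacobiTheta₂_term (n-1) (v + 1/2 + τ/2) τ /
        (1 - cexp (2*(π:ℂ)*I*(n:ℂ)*τ + 2*(π:ℂ)*I*u))) / jtheta v τ) * hKb
  rw [step1, hcomb, hz₁θ, hθ]
  rw [show -I * cexp (-(π:ℂ)*I*(u-v) - (π:ℂ)*I*τ/4)
      = -(cexp ((π:ℂ)*I/2) * cexp (-(π:ℂ)*I*(u-v) - (π:ℂ)*I*τ/4)) from by rw [hI2]; ring]
  rw [← Complex.exp_add]
  rw [div_mul_eq_mul_div, div_eq_iff (mul_ne_zero (Complex.exp_ne_zero _) hTne)]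
  rw [← Complex.exp_neg]
  have hexp2 : cexp ((π:ℂ)*I*u) * cexp (-(2*(π:ℂ)*I*u)) *
      cexp ((π:ℂ)*I*(τ + 2*(v + 1/2 - τ/2)))
      = cexp ((π:ℂ)*I/2 + (-(π:ℂ)*I*(u-v) - (π:ℂ)*I*τ/4)) *
        cexp ((π:ℂ)*I*τ/4 + (π:ℂ)*I*(v + 1/2)) := by
    rw [← Complex.exp_add, ← Complex.exp_add, ← Complex.exp_add]
    congr 1
    ring
  linear_combination (-(jacobiTheta₂ (v + 1/2 + τ/2) τ)) * hexp2
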